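/- Let p ≥ 1 be an integer, α > 1, β ≤ 0. Let a, b ∈ ℂ \ {0}, d, e ∈ ℂ with δ > 0 and Re(d + (e+1)/2) > 0, and let c be a real number with c > |a| + |b| + 1. Define the operator I(z) = z^p + Σ_{k≥p+1} (-1)^{k-p} (a)_{k-p} (b)_{k-p} (δ/4)^{k-p} / ((c)_{k-p} (d + (e+1)/2)_{k-p} ((k-p)!)^2) z^k, where (x)_n is the Pochhammer symbol. If Σ_{k≥p+1} [pα + β + k(1-β)] |(a)_{k-p} (b)_{k-p}| (δ/4)^{k-p} / ((c)_{k-p} (d + (e+1)/2)_{k-p} ((k-p)!)^2) < p(α-1), then I ∈ M_p(α,β), i.e. Re(z I'(z)/I(z)) < β |z I'(z)/I(z) - p| + pα for all z in the unit disk. -/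

import Mathlib

/-!
Write `I z = z ^ p + ∑ A_k z ^ k` with `A_k = 0` for `k ≤ p`, and let `T = ∑ ‖A_k‖` and
`S = ∑ (k - p) ‖A_k‖`. On the unit disc `‖z I' - p I‖ ≤ S ‖z‖ ^ p` and `‖I‖ ≥ (1 - T) ‖z‖ ^ p`,
so `w = z I' / I` satisfies `‖w - p‖ (1 - T) ≤ S`. As `Re w ≤ p + ‖w - p‖`, the class condition
follows from `p (α - 1) T + (1 - β) S < p (α - 1)`, which the hypothesis dominates term by term.
The bounds `‖(a)_n‖ ≤ (‖a‖)_n ≤ (c)_n ≤ (c + 1) ^ n n!` and `‖(d')_n‖ ≥ (Re d') ^ n` make the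
coefficients at most `q ^ n / n!` for a constant `q`, which gives the summability the argument
needs.
-/

open Complex Metric

lemma norm_ascPochhammer_eval_le {R : Type*} [NormedRing R] [NormOneClass R] (x : R) (n : ℕ) :
    ‖(ascPochhammer R n).eval x‖ ≤ (ascPochhammer ℝ n).eval ‖x‖ := by
  induction n with
  | zero => simp
  | succ n ih =>
    rw [ascPochhammer_succ_eval, ascPochhammer_succ_eval]
    calc ‖(ascPochhammer R n).eval x * (x + n)‖
        ≤ ‖(ascPochhammer R n).eval x‖ * ‖x + n‖ := norm_mul_le _ _
      _ ≤ (ascPochhammer ℝ n).eval ‖x‖ * (‖x‖ + n) := by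
        gcongr
        · exact (norm_nonneg _).trans ih
        · exact (norm_add_le _ _).trans (by simpa using Nat.norm_cast_le (α := R) n)

lemma ascPochhammer_eval_re_le_norm {x : ℂ} (hx : 0 ≤ x.re) (n : ℕ) :
    (ascPochhammer ℝ n).eval x.re ≤ ‖(ascPochhammer ℂ n).eval x‖ := by
  induction n with
  | zero => simp
  | succ n ih =>
    rw [ascPochhammer_succ_eval, ascPochhammer_succ_eval, norm_mul]
    have : x.re + n ≤ ‖x + n‖ := by simpa using re_le_norm (x + n)
    gcongr

lemma ascPochhammer_eval_nonneg {x : ℝ} (hx : 0 ≤ x) (n : ℕ) :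
    0 ≤ (ascPochhammer ℝ n).eval x := by
  induction n with
  | zero => simp
  | succ n ih => rw [ascPochhammer_succ_eval]; positivity

lemma ascPochhammer_eval_le_of_le {x y : ℝ} (hx : 0 ≤ x) (hxy : x ≤ y) (n : ℕ) :
    (ascPochhammer ℝ n).eval x ≤ (ascPochhammer ℝ n).eval y := by
  induction n with
  | zero => simp
  | succ n ih =>
    rw [ascPochhammer_succ_eval, ascPochhammer_succ_eval]
    have := ascPochhammer_eval_nonneg (hx.trans hxy) n
    gcongr

lemma pow_le_ascPochhammer_eval {x : ℝ} (hx : 0 ≤ x) (n : ℕ) :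
    x ^ n ≤ (ascPochhammer ℝ n).eval x := by
  induction n with
  | zero => simp
  | succ n ih =>
    rw [ascPochhammer_succ_eval, pow_succ]
    have := ascPochhammer_eval_nonneg hx n
    gcongr
    linarith [n.cast_nonneg (α := ℝ)]

lemma ascPochhammer_eval_le_add_one_pow_mul_factorial {x : ℝ} (hx : 0 ≤ x) (n : ℕ) :
    (ascPochhammer ℝ n).eval x ≤ (x + 1) ^ n * n.factorial := by
  induction n with
  | zero => simp
  | succ n ih =>
    rw [ascPochhammer_succ_eval, pow_succ, Nat.factorial_succ, Nat.cast_mul]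
    have := ascPochhammer_eval_nonneg hx n
    calc (ascPochhammer ℝ n).eval x * (x + n)
        ≤ (x + 1) ^ n * n.factorial * ((x + 1) * (n + 1)) := by
          gcongr
          nlinarith [n.cast_nonneg (α := ℝ)]
      _ = _ := by push_cast; ring

lemma ascPochhammer_eval_ofReal (x : ℝ) (n : ℕ) :
    (ascPochhammer ℂ n).eval (x : ℂ) = (ascPochhammer ℝ n).eval x := by
  rw [ascPochhammer_eval₂ ofRealHom]
  exact Polynomial.eval₂_at_apply _ _

section Summability

variable {a : ℕ → ℂ}

lemma summable_nat_mul_pow_div_factorial (q : ℝ) :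
    Summable fun n : ℕ => n * q ^ n / n.factorial := by
  refine (summable_nat_add_iff 1).mp <| ((Real.summable_pow_div_factorial q).mul_left q).congr
    fun n => ?_
  rw [Nat.factorial_succ]
  push_cast
  field_simp
  ring

lemma summable_norm_of_summable_nat_mul_norm (ha : Summable fun k : ℕ => k * ‖a k‖) :
    Summable fun k => ‖a k‖ := by
  refine (summable_nat_add_iff 1).mp <| ((summable_nat_add_iff 1).mpr ha).of_nonneg_of_le
    (fun k => norm_nonneg _) fun k => le_mul_of_one_le_left (norm_nonneg _) ?_
  simp

lemma summable_nat_mul_norm_shift (p : ℕ) (ha : Summable fun n : ℕ => n * ‖a n‖) :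
    Summable fun k : ℕ => k * ‖if p + 1 ≤ k then a (k - p) else 0‖ := by
  refine (summable_nat_add_iff p).mp <|
    (ha.add ((summable_norm_of_summable_nat_mul_norm ha).mul_left (p : ℝ))).of_nonneg_of_le
      (fun n => by positivity) fun n => ?_
  split_ifs
  · simp [add_mul]
  · simp only [norm_zero, mul_zero]; positivity

end Summability

/-- The coefficient of `z ^ (p + n)` in `I_{c,d}^{a,b}(p,e,δ)`. -/
noncomputable def hypergeomBesselCoeff (a b : ℂ) (c : ℝ) (d e : ℂ) (δ : ℝ) (n : ℕ) : ℂ :=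
  ((-1 : ℂ) ^ n * (ascPochhammer ℂ n).eval a * (ascPochhammer ℂ n).eval b * ((δ : ℂ) / 4) ^ n) /
    ((ascPochhammer ℂ n).eval (c : ℂ) * (ascPochhammer ℂ n).eval (d + (e + 1) / 2) *
      ((Nat.factorial n : ℂ)) ^ 2)

section Coefficients

variable {a b d e : ℂ} {c δ : ℝ}

lemma norm_hypergeomBesselCoeff (hc : 0 ≤ c) (hδ : 0 ≤ δ) (n : ℕ) :
    ‖hypergeomBesselCoeff a b c d e δ n‖ =
      ‖(ascPochhammer ℂ n).eval a * (ascPochhammer ℂ n).eval b‖ * (δ / 4) ^ n /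
        ((ascPochhammer ℝ n).eval c * ‖(ascPochhammer ℂ n).eval (d + (e + 1) / 2)‖ *
          ((Nat.factorial n : ℝ)) ^ 2) := by
  have hδ4 : ‖(δ : ℂ) / 4‖ = δ / 4 := by simp [abs_of_nonneg hδ]
  have hPc : ‖(ascPochhammer ℂ n).eval (c : ℂ)‖ = (ascPochhammer ℝ n).eval c := by
    rw [ascPochhammer_eval_ofReal, norm_real, Real.norm_of_nonneg (ascPochhammer_eval_nonneg hc n)]
  simp only [hypergeomBesselCoeff, norm_div, norm_mul, norm_pow, norm_neg, norm_one, one_pow,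
    one_mul, hδ4, hPc, norm_natCast]

lemma norm_hypergeomBesselCoeff_le (ha : ‖a‖ ≤ c) (hb : ‖b‖ ≤ c) (hc : 0 < c) (hδ : 0 ≤ δ)
    (hd : 0 < (d + (e + 1) / 2).re) (n : ℕ) :
    ‖hypergeomBesselCoeff a b c d e δ n‖ ≤
      ((c + 1) * (δ / 4) / (d + (e + 1) / 2).re) ^ n / n.factorial := by
  set r := (d + (e + 1) / 2).re
  set Pc := (ascPochhammer ℝ n).eval c
  have hPc : 0 < Pc := ascPochhammer_pos n c hc
  have hnum : ‖(ascPochhammer ℂ n).eval a * (ascPochhammer ℂ n).eval b‖ ≤ Pc * Pc := by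
    rw [norm_mul]
    gcongr
    · exact (norm_ascPochhammer_eval_le a n).trans
        (ascPochhammer_eval_le_of_le (norm_nonneg a) ha n)
    · exact (norm_ascPochhammer_eval_le b n).trans
        (ascPochhammer_eval_le_of_le (norm_nonneg b) hb n)
  have hden : r ^ n ≤ ‖(ascPochhammer ℂ n).eval (d + (e + 1) / 2)‖ :=
    (pow_le_ascPochhammer_eval hd.le n).trans (ascPochhammer_eval_re_le_norm hd.le n)
  calc ‖hypergeomBesselCoeff a b c d e δ n‖
      ≤ Pc * Pc * (δ / 4) ^ n / (Pc * r ^ n * (n.factorial : ℝ) ^ 2) := by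
        rw [norm_hypergeomBesselCoeff hc.le hδ]
        gcongr
    _ = Pc * (δ / 4) ^ n / (r ^ n * (n.factorial : ℝ) ^ 2) := by
        field_simp
    _ ≤ (c + 1) ^ n * n.factorial * (δ / 4) ^ n / (r ^ n * (n.factorial : ℝ) ^ 2) := by
        gcongr
        exact ascPochhammer_eval_le_add_one_pow_mul_factorial hc.le n
    _ = ((c + 1) * (δ / 4) / r) ^ n / n.factorial := by
        simp only [div_pow, mul_pow]
        field_simp

lemma summable_nat_mul_norm_hypergeomBesselCoeff (ha : ‖a‖ ≤ c) (hb : ‖b‖ ≤ c) (hc : 0 < c)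
    (hδ : 0 ≤ δ) (hd : 0 < (d + (e + 1) / 2).re) :
    Summable fun n : ℕ => n * ‖hypergeomBesselCoeff a b c d e δ n‖ :=
  (summable_nat_mul_pow_div_factorial _).of_nonneg_of_le (fun n => by positivity) fun n => by
    rw [mul_div_assoc]
    gcongr
    exact norm_hypergeomBesselCoeff_le ha hb hc hδ hd n

end Coefficients

section PowerSeries

variable {a : ℕ → ℂ}

lemma summable_mul_pow_of_summable_norm {b : ℕ → ℂ} (hb : Summable fun k => ‖b k‖) {z : ℂ}
    (hz : ‖z‖ ≤ 1) : Summable fun k => b k * z ^ k :=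
  .of_norm_bounded hb fun k => by
    rw [norm_mul, norm_pow]
    exact mul_le_of_le_one_right (norm_nonneg _) (pow_le_one₀ (norm_nonneg _) hz)

lemma norm_tsum_mul_pow_le {b : ℕ → ℂ} (hb : Summable fun k => ‖b k‖) {p : ℕ}
    (hbp : ∀ k < p, b k = 0) {z : ℂ} (hz : ‖z‖ ≤ 1) :
    ‖∑' k, b k * z ^ k‖ ≤ (∑' k, ‖b k‖) * ‖z‖ ^ p := by
  have hle : ∀ k, ‖b k * z ^ k‖ ≤ ‖b k‖ * ‖z‖ ^ p := fun k => by
    rw [norm_mul, norm_pow]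
    rcases lt_or_ge k p with hk | hk
    · simp [hbp k hk]
    · exact mul_le_mul_of_nonneg_left (pow_le_pow_of_le_one (norm_nonneg _) hz hk) (norm_nonneg _)
  calc ‖∑' k, b k * z ^ k‖ ≤ ∑' k, ‖b k * z ^ k‖ :=
        norm_tsum_le_tsum_norm (summable_mul_pow_of_summable_norm hb hz).norm
    _ ≤ ∑' k, ‖b k‖ * ‖z‖ ^ p :=
        (summable_mul_pow_of_summable_norm hb hz).norm.tsum_le_tsum hle (hb.mul_right _)
    _ = (∑' k, ‖b k‖) * ‖z‖ ^ p := tsum_mul_right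

lemma hasDerivAt_tsum_mul_pow (ha : Summable fun k : ℕ => k * ‖a k‖) {z : ℂ}
    (hz : z ∈ ball (0 : ℂ) 1) :
    HasDerivAt (fun w => ∑' k, a k * w ^ k) (∑' k, a k * (k * z ^ (k - 1))) z := by
  refine hasDerivAt_tsum_of_isPreconnected ha isOpen_ball (convex_ball 0 1).isPreconnected
    (fun k y _ => (hasDerivAt_pow k y).const_mul (a k)) (fun k y hy => ?_)
    (mem_ball_self one_pos) ?_ hz
  · rw [norm_mul, norm_mul, norm_pow, norm_natCast]
    calc ‖a k‖ * (k * ‖y‖ ^ (k - 1)) ≤ ‖a k‖ * (k * 1) := by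
          gcongr
          exact pow_le_one₀ (norm_nonneg _) (mem_ball_zero_iff.mp hy).le
      _ = k * ‖a k‖ := by ring
  · exact summable_of_ne_finset_zero (s := {0}) fun k hk => by
      simp [zero_pow (Finset.notMem_singleton.mp hk)]

lemma mul_deriv_sub_eq_tsum (p : ℕ) (ha : Summable fun k : ℕ => k * ‖a k‖) {z : ℂ}
    (hz : z ∈ ball (0 : ℂ) 1) :
    z * deriv (fun w => w ^ p + ∑' k, a k * w ^ k) z - p * (z ^ p + ∑' k, a k * z ^ k) =
      ∑' k : ℕ, ((k : ℂ) - p) * a k * z ^ k := by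
  have hz1 : ‖z‖ ≤ 1 := (mem_ball_zero_iff.mp hz).le
  have ha0 : Summable fun k => a k * z ^ k := summable_mul_pow_of_summable_norm
    (summable_norm_of_summable_nat_mul_norm ha) hz1
  have ha1 : Summable fun k : ℕ => (k : ℂ) * a k * z ^ k :=
    (summable_mul_pow_of_summable_norm (b := fun k => (k : ℂ) * a k) (by simpa using ha) hz1)
  have hpow : z * (p * z ^ (p - 1)) = p * z ^ p := by
    rcases p with _ | p
    · simp
    · rw [Nat.add_sub_cancel, pow_succ]; ring
  have hser : z * ∑' k, a k * (k * z ^ (k - 1)) = ∑' k : ℕ, (k : ℂ) * a k * z ^ k := by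
    rw [← tsum_mul_left]
    refine tsum_congr fun k => ?_
    rcases k with _ | k
    · simp
    · rw [Nat.add_sub_cancel, pow_succ]; ring
  have hderiv : HasDerivAt (fun w => w ^ p + ∑' k, a k * w ^ k)
      (p * z ^ (p - 1) + ∑' k, a k * (k * z ^ (k - 1))) z :=
    (hasDerivAt_pow p z).add (hasDerivAt_tsum_mul_pow ha hz)
  rw [hderiv.deriv, mul_add, hpow, hser,
    mul_add, ← tsum_mul_left, add_sub_add_left_eq_sub, ← ha1.tsum_sub (ha0.mul_left _)]
  exact tsum_congr fun k => by ring

end PowerSeries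

section ClassM

variable {p : ℕ} {a : ℕ → ℂ}

lemma norm_natCast_sub_mul (hap : ∀ k ≤ p, a k = 0) (k : ℕ) :
    ‖((k : ℂ) - p) * a k‖ = ((k : ℝ) - p) * ‖a k‖ := by
  rcases le_or_gt k p with hk | hk
  · simp [hap k hk]
  · rw [norm_mul, ← Nat.cast_sub hk.le, norm_natCast, Nat.cast_sub hk.le]

lemma summable_natCast_sub_mul_norm (p : ℕ) (ha : Summable fun k : ℕ => k * ‖a k‖) :
    Summable fun k : ℕ => ((k : ℝ) - p) * ‖a k‖ :=
  (ha.sub ((summable_norm_of_summable_nat_mul_norm ha).mul_left (p : ℝ))).congr fun k => by ring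

lemma norm_mul_deriv_div_sub_mul_le (hap : ∀ k ≤ p, a k = 0)
    (ha : Summable fun k : ℕ => k * ‖a k‖) (hT : ∑' k, ‖a k‖ < 1) {f : ℂ → ℂ}
    (hf : ∀ z, f z = z ^ p + ∑' k, a k * z ^ k) {z : ℂ} (hz : z ∈ ball (0 : ℂ) 1) (hz0 : z ≠ 0) :
    ‖z * deriv f z / f z - p‖ * (1 - ∑' k, ‖a k‖) ≤ ∑' k : ℕ, ((k : ℝ) - p) * ‖a k‖ := by
  obtain rfl : f = _ := funext hf
  have hz1 : ‖z‖ ≤ 1 := (mem_ball_zero_iff.mp hz).le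
  set T := ∑' k, ‖a k‖
  set S := ∑' k : ℕ, ((k : ℝ) - p) * ‖a k‖
  have hnum : ‖z * deriv (fun w => w ^ p + ∑' k, a k * w ^ k) z - p * (z ^ p + ∑' k, a k * z ^ k)‖
      ≤ S * ‖z‖ ^ p := by
    rw [mul_deriv_sub_eq_tsum p ha hz]
    simpa only [norm_natCast_sub_mul hap] using
      norm_tsum_mul_pow_le (b := fun k => ((k : ℂ) - p) * a k)
        ((summable_natCast_sub_mul_norm p ha).congr fun k => (norm_natCast_sub_mul hap k).symm)
        (fun k hk => by simp [hap k hk.le]) hz1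
  have hden : (1 - T) * ‖z‖ ^ p ≤ ‖z ^ p + ∑' k, a k * z ^ k‖ := by
    have := norm_tsum_mul_pow_le (summable_norm_of_summable_nat_mul_norm ha)
      (fun k hk => hap k hk.le) hz1
    have := norm_sub_norm_le (z ^ p) (-∑' k, a k * z ^ k)
    rw [norm_neg, sub_neg_eq_add, norm_pow] at this
    linarith
  have hI : 0 < ‖z ^ p + ∑' k, a k * z ^ k‖ :=
    lt_of_lt_of_le (mul_pos (sub_pos.mpr hT) (by positivity)) hden
  rw [div_sub' (norm_pos_iff.mp hI), norm_div, mul_comm _ (p : ℂ), div_mul_eq_mul_div,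
    div_le_iff₀ hI]
  calc _ ≤ S * ‖z‖ ^ p * (1 - T) := by gcongr
    _ = S * ((1 - T) * ‖z‖ ^ p) := by ring
    _ ≤ _ := by gcongr; exact tsum_nonneg fun k => norm_natCast_sub_mul hap k ▸ norm_nonneg _

lemma re_lt_of_norm_sub_mul_le {w : ℂ} {m α β S T : ℝ} (hβ : β ≤ 1) (hT : T < 1)
    (hw : ‖w - m‖ * (1 - T) ≤ S) (h : m * (α - 1) * T + (1 - β) * S < m * (α - 1)) :
    w.re < β * ‖w - m‖ + m * α := by
  have hX : (1 - β) * ‖w - m‖ < m * (α - 1) := by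
    refine lt_of_mul_lt_mul_right ?_ (sub_nonneg.mpr hT.le)
    nlinarith [mul_le_mul_of_nonneg_left hw (sub_nonneg.mpr hβ)]
  have hre : w.re - m ≤ ‖w - m‖ := by simpa using re_le_norm (w - m)
  linarith

theorem re_mul_deriv_div_lt_of_tsum_lt (hp : 0 < p) {α β : ℝ} (hα : 1 < α) (hβ : β ≤ 1)
    (hap : ∀ k ≤ p, a k = 0) (ha : Summable fun k : ℕ => k * ‖a k‖)
    (hsum : ∑' k : ℕ, (p * (α - 1) + (1 - β) * (k - p)) * ‖a k‖ < p * (α - 1))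
    {f : ℂ → ℂ} (hf : ∀ z, f z = z ^ p + ∑' k, a k * z ^ k) {z : ℂ} (hz : z ∈ ball (0 : ℂ) 1)
    (hz0 : z ≠ 0) :
    (z * deriv f z / f z).re < β * ‖z * deriv f z / f z - p‖ + p * α := by
  have hnorm := summable_norm_of_summable_nat_mul_norm ha
  have hsub := summable_natCast_sub_mul_norm p ha
  have hS : 0 ≤ ∑' k : ℕ, ((k : ℝ) - p) * ‖a k‖ :=
    tsum_nonneg fun k => norm_natCast_sub_mul hap k ▸ norm_nonneg _
  have hsplit : ∑' k : ℕ, (p * (α - 1) + (1 - β) * (k - p)) * ‖a k‖ =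
      p * (α - 1) * ∑' k, ‖a k‖ + (1 - β) * ∑' k : ℕ, ((k : ℝ) - p) * ‖a k‖ := by
    rw [← tsum_mul_left, ← tsum_mul_left, ← (hnorm.mul_left _).tsum_add (hsub.mul_left _)]
    exact tsum_congr fun k => by ring
  rw [hsplit] at hsum
  have hT : ∑' k, ‖a k‖ < 1 := by
    have : 0 < p * (α - 1) := mul_pos (by exact_mod_cast hp) (by linarith)
    nlinarith [mul_nonneg (sub_nonneg.mpr hβ) hS]
  exact re_lt_of_norm_sub_mul_le hβ hT
    (by exact_mod_cast norm_mul_deriv_div_sub_mul_le hap ha hT hf hz hz0) hsum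

end ClassM

theorem stmt_5_general (p : ℕ) (hp : 1 ≤ p) (α β : ℝ) (hα : 1 < α) (hβ : β ≤ 0)
    (a b d e : ℂ) (δ c : ℝ) (hδ : 0 < δ)
    (hd : 0 < (d + (e + 1) / 2).re)
    (hc : ‖a‖ + ‖b‖ + 1 < c)
    (I : ℂ → ℂ)
    (hI : ∀ z : ℂ, I z = z ^ p + ∑' k : ℕ,
      (if p + 1 ≤ k then
        ((-1 : ℂ) ^ (k - p) * (ascPochhammer ℂ (k - p)).eval a *
            (ascPochhammer ℂ (k - p)).eval b * ((δ : ℂ) / 4) ^ (k - p)) /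
          ((ascPochhammer ℂ (k - p)).eval (c : ℂ) *
            (ascPochhammer ℂ (k - p)).eval (d + (e + 1) / 2) *
            ((Nat.factorial (k - p) : ℂ)) ^ 2)
      else 0) * z ^ k)
    (hsum : ∑' k : ℕ,
      (if p + 1 ≤ k then
        ((p : ℝ) * α + β + (k : ℝ) * (1 - β)) *
          ‖(ascPochhammer ℂ (k - p)).eval a * (ascPochhammer ℂ (k - p)).eval b‖ *
          (δ / 4) ^ (k - p) /
          ((ascPochhammer ℝ (k - p)).eval c *
            ‖(ascPochhammer ℂ (k - p)).eval (d + (e + 1) / 2)‖ *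
            ((Nat.factorial (k - p) : ℝ)) ^ 2)
      else 0) < (p : ℝ) * (α - 1)) :
    ∀ z ∈ ball (0 : ℂ) 1, z ≠ 0 →
      (z * deriv I z / I z).re < β * ‖z * deriv I z / I z - (p : ℂ)‖ + (p : ℝ) * α := by
  intro z hz hz0
  have hc0 : 0 < c := by linarith [norm_nonneg a, norm_nonneg b]
  set A : ℕ → ℂ := fun k => if p + 1 ≤ k then hypergeomBesselCoeff a b c d e δ (k - p) else 0
  have hA1 : Summable fun k : ℕ => k * ‖A k‖ :=
    summable_nat_mul_norm_shift p <| summable_nat_mul_norm_hypergeomBesselCoeff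
      (by linarith [norm_nonneg b]) (by linarith [norm_nonneg a]) hc0 hδ.le hd
  have hA0 : Summable fun k => ‖A k‖ := summable_norm_of_summable_nat_mul_norm hA1
  have hsumA : ∑' k : ℕ, ((p : ℝ) * α + β + k * (1 - β)) * ‖A k‖ < p * (α - 1) := by
    refine (tsum_congr fun k => ?_).trans_lt hsum
    split_ifs with hk
    · simp only [A, if_pos hk, norm_hypergeomBesselCoeff hc0.le hδ.le]
      ring
    · simp only [A, if_neg hk, norm_zero, mul_zero]
  refine re_mul_deriv_div_lt_of_tsum_lt hp hα (by linarith) (fun k hk => if_neg (by omega)) hA1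
    ((Summable.tsum_le_tsum (fun k => ?_) ?_ ?_).trans_lt hsumA) hI hz hz0
  · have hp' : (1 : ℝ) ≤ p := by exact_mod_cast hp
    -- the weights differ by `2 p + β (1 - p) ≥ 0`
    exact mul_le_mul_of_nonneg_right (by nlinarith) (norm_nonneg _)
  · exact ((hA0.mul_left (p * (α - 1) - (1 - β) * p)).add (hA1.mul_left (1 - β))).congr
      fun k => by ring
  · exact ((hA0.mul_left (p * α + β)).add (hA1.mul_left (1 - β))).congr fun k => by ring

/-- Theorem 3.1: a sufficient condition for the operator
`I_{c,d}^{a,b}(p,e,δ)` to belong to the class `M_p(α,β)`. -/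
theorem stmt_5 (p : ℕ) (hp : 1 ≤ p) (α β : ℝ) (hα : 1 < α) (hβ : β ≤ 0)
    (a b d e : ℂ) (ha : a ≠ 0) (hb : b ≠ 0) (δ c : ℝ) (hδ : 0 < δ)
    (hd : 0 < (d + (e + 1) / 2).re)
    (hc : ‖a‖ + ‖b‖ + 1 < c)
    (I : ℂ → ℂ)
    (hI : ∀ z : ℂ, I z = z ^ p + ∑' k : ℕ,
      (if p + 1 ≤ k then
        ((-1 : ℂ) ^ (k - p) * (ascPochhammer ℂ (k - p)).eval a *
            (ascPochhammer ℂ (k - p)).eval b * ((δ : ℂ) / 4) ^ (k - p)) /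
          ((ascPochhammer ℂ (k - p)).eval (c : ℂ) *
            (ascPochhammer ℂ (k - p)).eval (d + (e + 1) / 2) *
            ((Nat.factorial (k - p) : ℂ)) ^ 2)
      else 0) * z ^ k)
    (hsum : ∑' k : ℕ,
      (if p + 1 ≤ k then
        ((p : ℝ) * α + β + (k : ℝ) * (1 - β)) *
          ‖(ascPochhammer ℂ (k - p)).eval a * (ascPochhammer ℂ (k - p)).eval b‖ *
          (δ / 4) ^ (k - p) /
          ((ascPochhammer ℝ (k - p)).eval c *
            ‖(ascPochhammer ℂ (k - p)).eval (d + (e + 1) / 2)‖ *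
            ((Nat.factorial (k - p) : ℝ)) ^ 2)
      else 0) < (p : ℝ) * (α - 1)) :
    ∀ z ∈ ball (0 : ℂ) 1, z ≠ 0 →
      (z * deriv I z / I z).re < β * ‖z * deriv I z / I z - (p : ℂ)‖ + (p : ℝ) * α :=
  stmt_5_general p hp α β hα hβ a b d e δ c hδ hd hc I hI hsum
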